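/- If a pair (S, d) is v-quasistable with respect to a positive polarization h and fixed vertex v, then the graph G − S is connected. -/

import Mathlib

open Finset

variable {V E : Type} [Fintype V] [Fintype E] [DecidableEq V] [DecidableEq E]

/-- Edges with both endpoints in `Y`. -/
def edgesIn (ends : E → V × V) (Y : Finset V) : Finset E :=
  univ.filter fun e => (ends e).1 ∈ Y ∧ (ends e).2 ∈ Y

/-- Edges with exactly one endpoint in `Y` (the cut `δ(Y)`). -/
def cutEdges (ends : E → V × V) (Y : Finset V) : Finset E :=
  univ.filter fun e => Xor ((ends e).1 ∈ Y) ((ends e).2 ∈ Y)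

/-- Arithmetic genus of the subgraph induced on `Y` with the edges of `S` removed:
`g(Y \ S) = |E(Y) \ S| - |Y| + 1 + Σ_{v ∈ Y} w v`. -/
def genusOf (ends : E → V × V) (w : V → ℕ) (Y : Finset V) (S : Finset E) : ℤ :=
  ((edgesIn ends Y) \ S).card - Y.card + 1 + ∑ v ∈ Y, (w v : ℤ)

/-- The right-hand side of the basic inequality for the pair `(S, d)`, the
polarization `h`, and the proper subcurve `Y`:
`g(Y \ S) - 1 + (h(Y)/H)(deg d + |S| + 1 - g) + |δ(Y) \ S|`. -/
def basicBound (ends : E → V × V) (w : V → ℕ) (h : V → ℤ) (S : Finset E) (d : V → ℤ)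
    (Y : Finset V) : ℚ :=
  (genusOf ends w Y S : ℚ) - 1
    + ((∑ v ∈ Y, (h v : ℚ)) / (∑ v, (h v : ℚ)))
        * ((∑ v, (d v : ℚ)) + S.card + 1 - (genusOf ends w univ ∅ : ℚ))
    + ((cutEdges ends Y) \ S).card

/-- The pair `(S, d)` is semistable with respect to the polarization `h`. -/
def Semistable (ends : E → V × V) (w : V → ℕ) (h : V → ℤ) (S : Finset E) (d : V → ℤ) : Prop :=
  ∀ Y : Finset V, Y.Nonempty → Y ≠ univ →
    (∑ v ∈ Y, (d v : ℚ)) ≤ basicBound ends w h S d Y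

/-- The pair `(S, d)` is stable with respect to the polarization `h`. -/
def Stable (ends : E → V × V) (w : V → ℕ) (h : V → ℤ) (S : Finset E) (d : V → ℤ) : Prop :=
  ∀ Y : Finset V, Y.Nonempty → Y ≠ univ →
    (∑ v ∈ Y, (d v : ℚ)) < basicBound ends w h S d Y

/-- The simple graph on the vertices of `G` in which two distinct vertices are adjacent
if some edge of the multigraph lying in `E₀` joins them. -/
def spanGraph (ends : E → V × V) (E₀ : Finset E) : SimpleGraph V where
  Adj u v := u ≠ v ∧ ∃ e ∈ E₀, ends e = (u, v) ∨ ends e = (v, u)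
  symm := by
    constructor
    rintro a b ⟨hne, e, he, hor⟩
    exact ⟨hne.symm, e, he, hor.symm⟩
  loopless := by constructor; rintro a ⟨hne, -⟩; exact hne rfl

/-- The underlying simple graph of the multigraph `G - S` obtained by deleting the
edges in `S`. -/
def graphMinus (ends : E → V × V) (S : Finset E) : SimpleGraph V :=
  spanGraph ends (univ \ S)

/-- The pair `(S, d)` is `v`-quasistable with respect to `(h, v)`: it is semistable and
whenever equality holds in the basic inequality for a proper subset `Y`, `v ∉ Y`. -/
def Quasistable (ends : E → V × V) (w : V → ℕ) (h : V → ℤ) (v : V)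
    (S : Finset E) (d : V → ℤ) : Prop :=
  Semistable ends w h S d ∧
    ∀ Y : Finset V, Y.Nonempty → Y ≠ univ →
      (∑ u ∈ Y, (d u : ℚ)) = basicBound ends w h S d Y → v ∉ Y

/-!
If `G - S` is disconnected, some nonempty proper set of vertices `Y` has its whole cut `δ(Y)`
inside `S`. Then the genera of `Y \ S` and `Yᶜ \ S` add up to `g + 1 - |S|` and the
polarization weights of `Y` and `Yᶜ` add up to `1`, so the basic bounds of `Y` and `Yᶜ` add up
to `deg d`. Semistability then forces equality in the basic inequality for both `Y` and `Yᶜ`,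
and `v`-quasistability excludes `v` from both of them, which is absurd.
-/

set_option linter.unusedSectionVars false

lemma cutEdges_compl (ends : E → V × V) (Y : Finset V) :
    cutEdges ends Yᶜ = cutEdges ends Y := by
  ext e
  simp only [cutEdges, mem_filter, mem_univ, true_and, mem_compl]
  simp only [Xor]
  tauto

lemma disjoint_edgesIn_compl (ends : E → V × V) (Y : Finset V) :
    Disjoint (edgesIn ends Y) (edgesIn ends Yᶜ) := by
  rw [disjoint_left]
  intro e he he'
  simp only [edgesIn, mem_filter, mem_univ, true_and, mem_compl] at he he'
  exact he'.1 he.1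

lemma edgesIn_sdiff_union_edgesIn_compl_sdiff (ends : E → V × V) (Y : Finset V) {S : Finset E}
    (hcut : cutEdges ends Y ⊆ S) :
    edgesIn ends Y \ S ∪ edgesIn ends Yᶜ \ S = univ \ S := by
  ext e
  have he : e ∉ S → ¬ Xor ((ends e).1 ∈ Y) ((ends e).2 ∈ Y) := fun heS hxor =>
    heS (hcut (mem_filter.2 ⟨mem_univ e, hxor⟩))
  simp only [edgesIn, mem_union, mem_sdiff, mem_filter, mem_univ, true_and, mem_compl,
    Xor] at he ⊢
  tauto

lemma genusOf_add_genusOf_compl (ends : E → V × V) (w : V → ℕ) (Y : Finset V) {S : Finset E}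
    (hcut : cutEdges ends Y ⊆ S) :
    genusOf ends w Y S + genusOf ends w Yᶜ S = genusOf ends w univ ∅ + 1 - S.card := by
  have hedges : (edgesIn ends Y \ S).card + (edgesIn ends Yᶜ \ S).card + S.card
      = Fintype.card E := by
    rw [← card_union_of_disjoint ((disjoint_edgesIn_compl ends Y).mono sdiff_le sdiff_le),
      edgesIn_sdiff_union_edgesIn_compl_sdiff ends Y hcut, ← compl_eq_univ_sdiff]
    exact card_compl_add_card S
  have hvert : (Y.card + Yᶜ.card : ℤ) = Fintype.card V := by
    exact_mod_cast card_add_card_compl Y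
  have hweight := sum_add_sum_compl Y fun u => (w u : ℤ)
  have hall : edgesIn ends (univ : Finset V) = univ := by simp [edgesIn]
  simp only [genusOf, hall, sdiff_empty, card_univ]
  push_cast [← hedges, ← hvert]
  linarith

lemma basicBound_add_basicBound_compl (ends : E → V × V) (w : V → ℕ) {h : V → ℤ}
    (hH : ∑ u, (h u : ℚ) ≠ 0) (d : V → ℤ) (Y : Finset V) {S : Finset E}
    (hcut : cutEdges ends Y ⊆ S) :
    basicBound ends w h S d Y + basicBound ends w h S d Yᶜ = ∑ u, (d u : ℚ) := by
  have hcutY : cutEdges ends Y \ S = ∅ := sdiff_eq_empty_iff_subset.2 hcut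
  have hcutYc : cutEdges ends Yᶜ \ S = ∅ := by rw [cutEdges_compl, hcutY]
  have hweight : (∑ u ∈ Y, (h u : ℚ)) / (∑ u, (h u : ℚ))
      + (∑ u ∈ Yᶜ, (h u : ℚ)) / (∑ u, (h u : ℚ)) = 1 := by
    rw [← add_div, sum_add_sum_compl, div_self hH]
  have hgenus : (genusOf ends w Y S : ℚ) + genusOf ends w Yᶜ S
      = genusOf ends w univ ∅ + 1 - S.card := by
    exact_mod_cast genusOf_add_genusOf_compl ends w Y hcut
  simp only [basicBound, hcutY, hcutYc, card_empty, Nat.cast_zero, add_zero]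
  linear_combination hgenus + ((∑ u, (d u : ℚ)) + S.card + 1 - genusOf ends w univ ∅) * hweight

lemma Semistable.sum_eq_basicBound_of_cutEdges_subset {ends : E → V × V} {w : V → ℕ}
    {h : V → ℤ} {S : Finset E} {d : V → ℤ} (hss : Semistable ends w h S d)
    (hH : ∑ u, (h u : ℚ) ≠ 0) {Y : Finset V} (hY : Y.Nonempty) (hYc : Yᶜ.Nonempty)
    (hcut : cutEdges ends Y ⊆ S) :
    ∑ u ∈ Y, (d u : ℚ) = basicBound ends w h S d Y ∧
      ∑ u ∈ Yᶜ, (d u : ℚ) = basicBound ends w h S d Yᶜ := by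
  have hle := hss Y hY (by simpa using (compl_ne_univ_iff_nonempty Yᶜ).2 hYc)
  have hle' := hss Yᶜ hYc ((compl_ne_univ_iff_nonempty Y).2 hY)
  have hsum := basicBound_add_basicBound_compl ends w hH d Y hcut
  have hdeg := sum_add_sum_compl Y fun u => (d u : ℚ)
  constructor <;> linarith

lemma Quasistable.not_cutEdges_subset {ends : E → V × V} {w : V → ℕ} {h : V → ℤ} {v : V}
    {S : Finset E} {d : V → ℤ} (hqs : Quasistable ends w h v S d)
    (hH : ∑ u, (h u : ℚ) ≠ 0) {Y : Finset V} (hY : Y.Nonempty) (hYc : Yᶜ.Nonempty) :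
    ¬ cutEdges ends Y ⊆ S := by
  intro hcut
  obtain ⟨hEq, hEqc⟩ := hqs.1.sum_eq_basicBound_of_cutEdges_subset hH hY hYc hcut
  have hvY := hqs.2 Y hY (by simpa using (compl_ne_univ_iff_nonempty Yᶜ).2 hYc) hEq
  exact hqs.2 Yᶜ hYc ((compl_ne_univ_iff_nonempty Y).2 hY) hEqc (mem_compl.2 hvY)

lemma cutEdges_subset_of_adj_closed (ends : E → V × V) {S : Finset E} {Y : Finset V}
    (hY : ∀ a b, a ∈ Y → (graphMinus ends S).Adj a b → b ∈ Y) :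
    cutEdges ends Y ⊆ S := by
  intro e he
  by_contra heS
  have hleaves : ∀ a b, a ∈ Y → b ∉ Y → ends e = (a, b) ∨ ends e = (b, a) → False :=
    fun a b ha hb hab => hb (hY a b ha ⟨fun hab' => hb (hab' ▸ ha), e, by simp [heS], hab⟩)
  simp only [cutEdges, mem_filter, mem_univ, true_and] at he
  rcases he with ⟨h1, h2⟩ | ⟨h2, h1⟩
  · exact hleaves _ _ h1 h2 (Or.inl rfl)
  · exact hleaves _ _ h2 h1 (Or.inr rfl)

lemma exists_cutEdges_subset_of_not_reachable (ends : E → V × V) {S : Finset E} {a b : V}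
    (hab : ¬ (graphMinus ends S).Reachable a b) :
    ∃ Y : Finset V, Y.Nonempty ∧ Yᶜ.Nonempty ∧ cutEdges ends Y ⊆ S := by
  classical
  refine ⟨univ.filter ((graphMinus ends S).Reachable a), ⟨a, by simp⟩, ⟨b, by simp [hab]⟩,
    cutEdges_subset_of_adj_closed ends fun x y hx hxy => ?_⟩
  simp only [mem_filter, mem_univ, true_and] at hx ⊢
  exact hx.trans hxy.reachable

theorem stmt8_general [Nonempty V] (ends : E → V × V) (w : V → ℕ) (d : V → ℤ) (h : V → ℤ)
    (hpos : ∀ u, 0 < h u) (v : V) (S : Finset E)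
    (hqs : Quasistable ends w h v S d) :
    (graphMinus ends S).Connected := by
  have hH : ∑ u, (h u : ℚ) ≠ 0 :=
    (sum_pos (fun u _ => by exact_mod_cast hpos u) univ_nonempty).ne'
  refine ⟨fun a b => ?_⟩
  by_contra hab
  obtain ⟨Y, hY, hYc, hcut⟩ := exists_cutEdges_subset_of_not_reachable ends hab
  exact hqs.not_cutEdges_subset hH hY hYc hcut

/-- If `(S, d)` is `v`-quasistable with respect to a positive
polarization `h` and a fixed vertex `v`, then the graph `G - S` is connected. -/
theorem stmt8 [Nonempty V] (ends : E → V × V) (w : V → ℕ) (d : V → ℤ) (h : V → ℤ)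
    (hpos : ∀ u, 0 < h u) (v : V) (S : Finset E)
    (hGconn : (graphMinus ends (∅ : Finset E)).Connected)
    (hqs : Quasistable ends w h v S d) :
    (graphMinus ends S).Connected :=
  stmt8_general ends w d h hpos v S hqs
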